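/- Assume every bidder's valuation is monotone gross substitute. Then for every price vector p ∈ ℕ^m and every S ⊆ Ω, the Lyapunov function satisfies L(p + 1_S) = L(p) − l^p(S) + |S|. -/
import Mathlib


/-- Utility of a bundle `S` at prices `p`: `v(S) - p(S)` (an integer). -/
def util {m : ℕ} (v : Finset (Fin m) → ℕ) (p : Fin m → ℕ) (S : Finset (Fin m)) : ℤ :=
  (v S : ℤ) - ∑ j ∈ S, (p j : ℤ)

/-- Demand collection: bundles of maximum utility at prices `p`. -/
def demand {m : ℕ} (v : Finset (Fin m) → ℕ) (p : Fin m → ℕ) : Finset (Finset (Fin m)) :=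
  Finset.univ.filter fun D => ∀ T : Finset (Fin m), util v p T ≤ util v p D

lemma demand_nonempty {m : ℕ} (v : Finset (Fin m) → ℕ) (p : Fin m → ℕ) :
    (demand v p).Nonempty := by
  obtain ⟨D, hD, hmax⟩ := Finset.exists_max_image (Finset.univ : Finset (Finset (Fin m)))
    (util v p) ⟨∅, Finset.mem_univ ∅⟩
  exact ⟨D, Finset.mem_filter.2 ⟨Finset.mem_univ D, fun T => hmax T (Finset.mem_univ T)⟩⟩

/-- Maximum utility of a bidder at prices `p`. -/
def uMax {m : ℕ} (v : Finset (Fin m) → ℕ) (p : Fin m → ℕ) : ℤ :=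
  Finset.univ.sup' Finset.univ_nonempty (util v p)

/-- A valuation is monotone with respect to inclusion. -/
def MonotoneVal {m : ℕ} (v : Finset (Fin m) → ℕ) : Prop :=
  ∀ ⦃S T : Finset (Fin m)⦄, S ⊆ T → v S ≤ v T

/-- Gross substitute: if `S` is demanded at `p` and `q ≥ p`, some demanded set at `q`
contains every item of `S` whose price did not change. -/
def GrossSub {m : ℕ} (v : Finset (Fin m) → ℕ) : Prop :=
  ∀ p q : Fin m → ℕ, p ≤ q → ∀ S ∈ demand v p,
    ∃ S' ∈ demand v q, ∀ j ∈ S, p j = q j → j ∈ S'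

/-- Requirement `l_p(S)` of a single bidder. -/
def req {m : ℕ} (v : Finset (Fin m) → ℕ) (p : Fin m → ℕ) (S : Finset (Fin m)) : ℕ :=
  (demand v p).inf' (demand_nonempty v p) fun D => (S ∩ D).card

/-- Redundant `h_p(S)` of a single bidder. -/
def red {m : ℕ} (v : Finset (Fin m) → ℕ) (p : Fin m → ℕ) (S : Finset (Fin m)) : ℕ :=
  (demand v p).sup' (demand_nonempty v p) fun D => (S ∩ D).card

/-- Auction requirement `l^p(S)`. -/
def reqAll {m n : ℕ} (v : Fin n → Finset (Fin m) → ℕ) (p : Fin m → ℕ) (S : Finset (Fin m)) : ℕ :=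
  ∑ i, req (v i) p S

/-- Auction redundant `h^p(S)`. -/
def redAll {m n : ℕ} (v : Fin n → Finset (Fin m) → ℕ) (p : Fin m → ℕ) (S : Finset (Fin m)) : ℕ :=
  ∑ i, red (v i) p S

/-- Lyapunov function `L(p) = Σ_i u_i(p) + Σ_j p_j`. -/
def lyap {m n : ℕ} (v : Fin n → Finset (Fin m) → ℕ) (p : Fin m → ℕ) : ℤ :=
  ∑ i, uMax (v i) p + ∑ j, (p j : ℤ)

/-- `p` is Walrasian: there is a partition of the items into demanded sets. -/
def IsWalrasian {m n : ℕ} (v : Fin n → Finset (Fin m) → ℕ) (p : Fin m → ℕ) : Prop :=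
  ∃ A : Fin n → Finset (Fin m),
    (∀ i j, i ≠ j → Disjoint (A i) (A j)) ∧
    Finset.univ.biUnion A = Finset.univ ∧
    ∀ i, A i ∈ demand (v i) p

/-- `p + 1_S`. -/
def incr {m : ℕ} (p : Fin m → ℕ) (S : Finset (Fin m)) : Fin m → ℕ :=
  fun j => if j ∈ S then p j + 1 else p j

/-- `p - 1_S`. -/
def decr {m : ℕ} (p : Fin m → ℕ) (S : Finset (Fin m)) : Fin m → ℕ :=
  fun j => if j ∈ S then p j - 1 else p j

/-- `S` is over-demanded at `p`: `l^p(S) > |S|`. -/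
def OverDemanded {m n : ℕ} (v : Fin n → Finset (Fin m) → ℕ) (p : Fin m → ℕ)
    (S : Finset (Fin m)) : Prop :=
  S.card < reqAll v p S

/-- `S` is weakly over-demanded at `p`: `l^p(S) ≥ |S|`. -/
def WeaklyOverDemanded {m n : ℕ} (v : Fin n → Finset (Fin m) → ℕ) (p : Fin m → ℕ)
    (S : Finset (Fin m)) : Prop :=
  S.card ≤ reqAll v p S

/-- `S` is under-demanded at `p`: `h^p(S) < |S|`. -/
def UnderDemanded {m n : ℕ} (v : Fin n → Finset (Fin m) → ℕ) (p : Fin m → ℕ)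
    (S : Finset (Fin m)) : Prop :=
  redAll v p S < S.card

/-- `S` is weakly under-demanded at `p`: `h^p(S) ≤ |S|`. -/
def WeaklyUnderDemanded {m n : ℕ} (v : Fin n → Finset (Fin m) → ℕ) (p : Fin m → ℕ)
    (S : Finset (Fin m)) : Prop :=
  redAll v p S ≤ S.card

/-- `S ∈ ED(p)`: `S` is over-demanded at `p` and no nonempty `T ⊆ S` is weakly
under-demanded at `p + 1_S`. -/
def ExcessDemand {m n : ℕ} (v : Fin n → Finset (Fin m) → ℕ) (p : Fin m → ℕ)
    (S : Finset (Fin m)) : Prop :=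
  OverDemanded v p S ∧
    ∀ T ⊆ S, T ≠ ∅ → ¬ WeaklyUnderDemanded v (incr p S) T

/-- `S ∈ DD(p)`: `S` is under-demanded at `p` and no nonempty `T ⊆ S` is weakly
over-demanded at `p - 1_S`. -/
def DearthDemand {m n : ℕ} (v : Fin n → Finset (Fin m) → ℕ) (p : Fin m → ℕ)
    (S : Finset (Fin m)) : Prop :=
  UnderDemanded v p S ∧
    ∀ T ⊆ S, T ≠ ∅ → ¬ WeaklyOverDemanded v (decr p S) T

/-- `S` is a minimal minimizer for `p`. -/
def MinimalMinimizer {m n : ℕ} (v : Fin n → Finset (Fin m) → ℕ) (p : Fin m → ℕ)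
    (S : Finset (Fin m)) : Prop :=
  lyap v (incr p S) < lyap v p ∧
    (∀ T : Finset (Fin m), lyap v (incr p S) ≤ lyap v (incr p T)) ∧
    ∀ T : Finset (Fin m), T ⊂ S → lyap v (incr p S) < lyap v (incr p T)

/-- `S` is a maximal minimizer for `p`. -/
def MaximalMinimizer {m n : ℕ} (v : Fin n → Finset (Fin m) → ℕ) (p : Fin m → ℕ)
    (S : Finset (Fin m)) : Prop :=
  lyap v (decr p S) < lyap v p ∧
    (∀ T : Finset (Fin m), lyap v (decr p S) ≤ lyap v (decr p T)) ∧
    ∀ T : Finset (Fin m), T ⊂ S → lyap v (decr p S) < lyap v (decr p T)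

lemma mem_demand {m : ℕ} {v : Finset (Fin m) → ℕ} {p : Fin m → ℕ} {D : Finset (Fin m)} :
    D ∈ demand v p ↔ ∀ T, util v p T ≤ util v p D := by
  simp [demand]

lemma util_incr {m : ℕ} (v : Finset (Fin m) → ℕ) (p : Fin m → ℕ) (S T : Finset (Fin m)) :
    util v (incr p S) T = util v p T - ((S ∩ T).card : ℤ) := by
  unfold util incr
  have h1 : ∑ j ∈ T, ((if j ∈ S then p j + 1 else p j : ℕ) : ℤ)
      = ∑ j ∈ T, ((p j : ℤ) + if j ∈ S then 1 else 0) := by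
    refine Finset.sum_congr rfl fun j _ => ?_
    split <;> simp
  have h2 : (∑ j ∈ T, if j ∈ S then (1:ℤ) else 0) = ((S ∩ T).card : ℤ) := by
    rw [Finset.sum_ite_mem, Finset.inter_comm]
    simp
  rw [h1, Finset.sum_add_distrib, h2]
  ring

lemma exists_common {m : ℕ} {v : Finset (Fin m) → ℕ} (hgs : GrossSub v)
    (S : Finset (Fin m)) :
    ∀ p : Fin m → ℕ, ∃ D, D ∈ demand v p ∧ D ∈ demand v (incr p S) := by
  induction S using Finset.cons_induction with
  | empty =>
    intro p
    have h : incr p ∅ = p := by funext j; simp [incr]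
    obtain ⟨D, hD⟩ := demand_nonempty v p
    exact ⟨D, hD, h ▸ hD⟩
  | cons a S' ha IH =>
    intro p
    obtain ⟨D1, hD1p, hD1q'⟩ := IH p
    set q' := incr p S' with hq'def
    have hq : incr p (Finset.cons a S' ha) = incr q' {a} := by
      funext j
      by_cases hja : j = a
      · subst hja; simp [hq'def, incr, ha]
      · by_cases hjS : j ∈ S' <;> simp [hq'def, incr, hja, hjS]
    by_cases hall : ∀ T ∈ demand v q', a ∈ T
    · refine ⟨D1, hD1p, ?_⟩
      rw [hq, mem_demand]
      intro T
      simp only [util_incr]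
      have haD1 : a ∈ D1 := hall D1 hD1q'
      have hcD1 : ((({a} : Finset (Fin m)) ∩ D1).card : ℤ) = 1 := by
        rw [Finset.singleton_inter_of_mem haD1]; simp
      have hle := mem_demand.mp hD1q' T
      by_cases haT : a ∈ T
      · rw [Finset.singleton_inter_of_mem haT, hcD1]
        simp only [Finset.card_singleton]
        push_cast
        linarith
      · rw [Finset.singleton_inter_of_notMem haT, hcD1]
        have hT : T ∉ demand v q' := fun h => haT (hall T h)
        have hlt : util v q' T < util v q' D1 := by
          rcases lt_or_eq_of_le hle with h | h
          · exact h
          · exact absurd (mem_demand.mpr fun T' => (mem_demand.mp hD1q' T').trans h.ge) hT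
        simp only [Finset.card_empty]
        push_cast
        linarith
    · push_neg at hall
      obtain ⟨T0, hT0, haT0⟩ := hall
      by_cases haD1 : a ∈ D1
      · have hle : q' ≤ incr q' ({a} : Finset (Fin m)) := by
          intro j; simp only [incr]; split <;> omega
        obtain ⟨D'', hD''q, hsub⟩ := hgs q' _ hle D1 hD1q'
        have hsub' : S' ∩ D1 ⊆ Finset.cons a S' ha ∩ D'' := by
          intro j hj
          rw [Finset.mem_inter] at hj ⊢
          obtain ⟨hjS, hjD⟩ := hj
          have hja : j ≠ a := fun h => ha (h ▸ hjS)
          refine ⟨Finset.mem_cons_of_mem hjS, hsub j hjD ?_⟩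
          simp [incr, hja]
        have hcard : ((S' ∩ D1).card : ℤ) ≤ ((Finset.cons a S' ha ∩ D'').card : ℤ) := by
          exact_mod_cast Finset.card_le_card hsub'
        have h1 : util v (incr q' {a}) T0 ≤ util v (incr q' {a}) D'' := mem_demand.mp hD''q T0
        have h2 : util v (incr q' {a}) T0 = util v q' T0 := by
          rw [util_incr, Finset.singleton_inter_of_notMem haT0]
          simp
        have h3 : util v q' T0 = util v q' D1 :=
          le_antisymm (mem_demand.mp hD1q' T0) (mem_demand.mp hT0 D1)
        have h4 : util v q' D1 = util v p D1 - ((S' ∩ D1).card : ℤ) := util_incr v p S' D1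
        have h5 : util v (incr q' {a}) D''
            = util v p D'' - ((Finset.cons a S' ha ∩ D'').card : ℤ) := by
          rw [← hq]; exact util_incr v p _ D''
        have hmain : util v p D1 ≤ util v p D'' := by linarith
        refine ⟨D'', mem_demand.mpr fun T => le_trans (mem_demand.mp hD1p T) hmain, ?_⟩
        rw [hq]; exact hD''q
      · refine ⟨D1, hD1p, ?_⟩
        rw [hq, mem_demand]
        intro T
        simp only [util_incr]
        rw [Finset.singleton_inter_of_notMem haD1]
        have hle := mem_demand.mp hD1q' T
        have hnn : (0:ℤ) ≤ ((({a} : Finset (Fin m)) ∩ T).card : ℤ) := by positivity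
        simp only [Finset.card_empty]
        push_cast
        linarith

lemma uMax_incr {m : ℕ} {v : Finset (Fin m) → ℕ} (hgs : GrossSub v)
    (p : Fin m → ℕ) (S : Finset (Fin m)) :
    uMax v (incr p S) = uMax v p - (req v p S : ℤ) := by
  obtain ⟨D, hDp, hDq⟩ := exists_common hgs S p
  have hup : uMax v p = util v p D :=
    le_antisymm (Finset.sup'_le _ _ fun T _ => mem_demand.mp hDp T)
      (Finset.le_sup' _ (Finset.mem_univ D))
  have huq : uMax v (incr p S) = util v (incr p S) D :=
    le_antisymm (Finset.sup'_le _ _ fun T _ => mem_demand.mp hDq T)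
      (Finset.le_sup' _ (Finset.mem_univ D))
  have hreq : req v p S = (S ∩ D).card := by
    apply le_antisymm
    · exact Finset.inf'_le _ hDp
    · apply Finset.le_inf'
      intro E hE
      have h1 : util v (incr p S) E ≤ util v (incr p S) D := mem_demand.mp hDq E
      rw [util_incr, util_incr] at h1
      have h2 : util v p E = util v p D :=
        le_antisymm (mem_demand.mp hDp E) (mem_demand.mp hE D)
      have : ((S ∩ D).card : ℤ) ≤ ((S ∩ E).card : ℤ) := by linarith
      exact_mod_cast this
  rw [huq, util_incr, hup, hreq]

theorem stmt3 {m n : ℕ} (v : Fin n → Finset (Fin m) → ℕ)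
    (hzero : ∀ i, v i ∅ = 0) (hmono : ∀ i, MonotoneVal (v i))
    (hgs : ∀ i, GrossSub (v i))
    (p : Fin m → ℕ) (S : Finset (Fin m)) :
    lyap v (incr p S) = lyap v p - (reqAll v p S : ℤ) + (S.card : ℤ) := by
  unfold lyap
  have h1 : ∀ i, uMax (v i) (incr p S) = uMax (v i) p - (req (v i) p S : ℤ) :=
    fun i => uMax_incr (hgs i) p S
  have h2 : ∑ j, ((incr p S j : ℕ) : ℤ) = ∑ j, (p j : ℤ) + (S.card : ℤ) := by
    have h3 : ∀ j, ((incr p S j : ℕ) : ℤ) = (p j : ℤ) + if j ∈ S then 1 else 0 := by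
      intro j; simp only [incr]; split <;> push_cast <;> ring
    rw [Finset.sum_congr rfl fun j _ => h3 j, Finset.sum_add_distrib]
    congr 1
    rw [Finset.sum_ite_mem, Finset.univ_inter]
    simp
  have h4 : (reqAll v p S : ℤ) = ∑ i, (req (v i) p S : ℤ) := by
    unfold reqAll; push_cast; ring
  rw [Finset.sum_congr rfl fun i _ => h1 i, Finset.sum_sub_distrib, h2, h4]
  ring
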